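/- arXiv:math/9411209 — 2 statements merged into one kernel-verified Lean document; each statement's English description precedes it below -/
import Mathlib

section
/- Let F ⊆ A. If F is a SAGBI basis for A, then A = R[F], i.e., F generates A as an R-subalgebra of R[x_1,…,x_n]. -/
/-!
Induction on the leading power product of `a ∈ A`. Over a domain, leading terms are
multiplicative, so `R[Lt F]` is the `R`-span of the leading terms of the power products of `F`.
Writing `lt(a)` in that span and keeping only the power products whose leading power product is
`lp(a)` gives `b ∈ R[F]` with `lt(b) = lt(a)`; then `a - b ∈ A` has a smaller leading power
product, so it lies in `R[F]` by induction, and so does `a`. A term order is a Mathlib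
`MonomialOrder` (its least exponent is `0`), whose leading-term calculus is used throughout.
-/

open MvPolynomial

/-- A term order on the monomials (exponent vectors) of a polynomial ring in `n`
variables: a well-founded linear order compatible with multiplication of power
products (i.e. with addition of exponent vectors). -/
structure TermOrder (n : ℕ) where
  lo : LinearOrder (Fin n →₀ ℕ)
  wf : WellFounded lo.lt
  add_le_add : ∀ a b c : Fin n →₀ ℕ, lo.le a b → lo.le (a + c) (b + c)

namespace TermOrder

variable {n : ℕ} {R : Type*} [CommRing R]

/-- `lp p`: the leading power product (exponent vector) of `p`; junk value `0`
for the zero polynomial. -/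
noncomputable def lp (ord : TermOrder n) (p : MvPolynomial (Fin n) R) : Fin n →₀ ℕ :=
  (@Finset.max _ ord.lo p.support).unbotD 0

/-- `lc p`: the leading coefficient of `p` (0 if `p = 0`). -/
noncomputable def lc (ord : TermOrder n) (p : MvPolynomial (Fin n) R) : R :=
  p.coeff (ord.lp p)

/-- `ltm p`: the leading term `lc(p)·lp(p)` of `p` (0 if `p = 0`). -/
noncomputable def ltm (ord : TermOrder n) (p : MvPolynomial (Fin n) R) : MvPolynomial (Fin n) R :=
  monomial (ord.lp p) (ord.lc p)

end TermOrder

variable {n : ℕ} {R : Type*} [CommRing R]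

/-- An `F`-power product: a finite product `∏ fᵢ^{eᵢ}` with `fᵢ ∈ F`. -/
def IsPowerProduct (F : Set (MvPolynomial (Fin n) R)) (q : MvPolynomial (Fin n) R) : Prop :=
  ∃ e : MvPolynomial (Fin n) R →₀ ℕ, (e.support : Set (MvPolynomial (Fin n) R)) ⊆ F ∧
    q = e.prod (fun f k => f ^ k)

/-- `F` is a SAGBI basis for the `R`-subalgebra `A`: `R[Lt A] = R[Lt F]`. -/
def IsSAGBI (ord : TermOrder n) (A : Subalgebra R (MvPolynomial (Fin n) R))
    (F : Set (MvPolynomial (Fin n) R)) : Prop :=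
  Algebra.adjoin R (ord.ltm '' (A : Set (MvPolynomial (Fin n) R))) =
    Algebra.adjoin R (ord.ltm '' F)

/-- One step of s-reduction of `g` to `h` via `F`. -/
def SStep (ord : TermOrder n) (F : Set (MvPolynomial (Fin n) R))
    (g h : MvPolynomial (Fin n) R) : Prop :=
  ∃ (β : Fin n →₀ ℕ) (N : ℕ) (q : Fin N → MvPolynomial (Fin n) R) (r : Fin N → R),
    g.coeff β ≠ 0 ∧
    (∀ i, IsPowerProduct F (q i) ∧ q i ≠ 0 ∧ ord.lp (q i) = β) ∧
    g.coeff β = ∑ i, r i * ord.lc (q i) ∧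
    h = g - ∑ i, C (r i) * q i

/-- `g` s-reduces to `h` via `F`: a finite chain of one-step s-reductions. -/
def SReduce (ord : TermOrder n) (F : Set (MvPolynomial (Fin n) R)) :
    MvPolynomial (Fin n) R → MvPolynomial (Fin n) R → Prop :=
  Relation.ReflTransGen (SStep ord F)

/-- One step of si-reduction of `h` to `h'` via `G`, relative to the subalgebra `A`. -/
def SiStep (ord : TermOrder n) (A : Subalgebra R (MvPolynomial (Fin n) R))
    (G : Set (MvPolynomial (Fin n) R)) (h h' : MvPolynomial (Fin n) R) : Prop :=
  ∃ (α : Fin n →₀ ℕ) (M : ℕ) (g a : Fin M → MvPolynomial (Fin n) R),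
    h.coeff α ≠ 0 ∧
    (∀ i, g i ∈ G) ∧ (∀ i, a i ∈ A) ∧
    (∀ i, a i * g i ≠ 0 ∧ ord.lp (a i * g i) = α) ∧
    (monomial α (h.coeff α) : MvPolynomial (Fin n) R) = ∑ i, ord.ltm (a i * g i) ∧
    h' = h - ∑ i, a i * g i

/-- `h` si-reduces to `h'` via `G`: a finite chain of one-step si-reductions. -/
def SiReduce (ord : TermOrder n) (A : Subalgebra R (MvPolynomial (Fin n) R))
    (G : Set (MvPolynomial (Fin n) R)) :
    MvPolynomial (Fin n) R → MvPolynomial (Fin n) R → Prop :=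
  Relation.ReflTransGen (SiStep ord A G)

/-- The subalgebra `R[Lt A]` generated by the leading terms of elements of `A`. -/
noncomputable def LtAlg (ord : TermOrder n) (A : Subalgebra R (MvPolynomial (Fin n) R)) :
    Subalgebra R (MvPolynomial (Fin n) R) :=
  Algebra.adjoin R (ord.ltm '' (A : Set (MvPolynomial (Fin n) R)))

/-- The leading term of an element of `A`, as an element of `R[Lt A]`. -/
noncomputable def ltA (ord : TermOrder n) (A : Subalgebra R (MvPolynomial (Fin n) R))
    (a : A) : LtAlg ord A :=
  ⟨ord.ltm (a : MvPolynomial (Fin n) R), Algebra.subset_adjoin ⟨a, a.2, rfl⟩⟩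

/-- `G ⊆ I` is a SAGBI–Gröbner basis (SG-basis) for the ideal `I` of `A`:
`Lt G` generates the ideal `⟨Lt I⟩` in the subalgebra `R[Lt A]`. -/
def IsSGBasis (ord : TermOrder n) (A : Subalgebra R (MvPolynomial (Fin n) R))
    (I : Ideal A) (G : Set A) : Prop :=
  Ideal.span
      ((Subtype.val ⁻¹' (ord.ltm '' (Subtype.val '' G)) : Set (LtAlg ord A))) =
  Ideal.span
      ((Subtype.val ⁻¹' (ord.ltm '' (Subtype.val '' (I : Set A))) : Set (LtAlg ord A)))

namespace MonomialOrder

open Submodule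
open scoped MonomialOrder

variable {σ : Type*} (m : MonomialOrder σ)

theorem degree_sub_lt_of_leadingTerm_eq {p q : MvPolynomial σ R}
    (h : m.leadingTerm p = m.leadingTerm q) (hpq : p ≠ q) :
    m.degree (p - q) ≺[m] m.degree p := by
  obtain ⟨hlc, hdeg⟩ := m.leadingTerm_eq_leadingTerm_iff.mp h
  have hle : m.degree (p - q) ≼[m] m.degree p := by
    simpa [hdeg] using m.degree_sub_le (f := p) (g := q)
  refine hle.lt_of_ne fun hdeg' => sub_ne_zero.mpr hpq ?_
  rw [← m.coeff_degree_eq_zero_iff, m.toSyn.injective hdeg', coeff_sub]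
  exact sub_eq_zero.mpr (by rwa [leadingCoeff, leadingCoeff, ← hdeg] at hlc)

theorem le_of_forall_exists_leadingTerm_eq {A B : AddSubgroup (MvPolynomial σ R)} (hBA : B ≤ A)
    (h : ∀ a ∈ A, ∃ b ∈ B, m.leadingTerm b = m.leadingTerm a) : A ≤ B := by
  intro a ha
  induction hd : m.toSyn (m.degree a) using WellFoundedLT.induction generalizing a with
  | _ d ih =>
    obtain ⟨b, hb, hba⟩ := h a ha
    by_cases hab : a = b
    · rwa [hab]
    have hlt := m.degree_sub_lt_of_leadingTerm_eq hba.symm hab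
    have hsub : a - b ∈ B := ih _ (hd ▸ hlt) (A.sub_mem ha (hBA hb)) rfl
    simpa using B.add_mem hsub hb

theorem exists_mem_span_degree_le_coeff_eq {P : Set (MvPolynomial σ R)} {x : MvPolynomial σ R}
    (hx : x ∈ span R (m.leadingTerm '' P)) (d : σ →₀ ℕ) :
    ∃ b ∈ span R P, m.degree b ≼[m] d ∧ b.coeff d = x.coeff d := by
  classical
  induction hx using Submodule.span_induction with
  | mem y hy =>
    obtain ⟨q, hq, rfl⟩ := hy
    by_cases hqd : m.degree q = d
    · refine ⟨q, subset_span hq, (congrArg m.toSyn hqd).le, ?_⟩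
      rw [leadingTerm, coeff_monomial, if_pos hqd, leadingCoeff, hqd]
    · refine ⟨0, zero_mem _, by simp, ?_⟩
      rw [leadingTerm, coeff_monomial, if_neg hqd, coeff_zero]
  | zero => exact ⟨0, zero_mem _, by simp, by simp⟩
  | add y z _ _ hy hz =>
    obtain ⟨b, hb, hbd, hbc⟩ := hy
    obtain ⟨c, hc, hcd, hcc⟩ := hz
    exact ⟨b + c, add_mem hb hc, m.degree_add_le.trans (sup_le hbd hcd), by simp [hbc, hcc]⟩
  | smul r y _ hy =>
    obtain ⟨b, hb, hbd, hbc⟩ := hy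
    exact ⟨r • b, smul_mem _ r hb, m.degree_smul_le.trans hbd, by simp [hbc]⟩

theorem exists_mem_span_leadingTerm_eq {P : Set (MvPolynomial σ R)} {a : MvPolynomial σ R}
    (ha : m.leadingTerm a ∈ span R (m.leadingTerm '' P)) :
    ∃ b ∈ span R P, m.leadingTerm b = m.leadingTerm a := by
  classical
  rcases eq_or_ne a 0 with rfl | ha0
  · exact ⟨0, zero_mem _, rfl⟩
  obtain ⟨b, hb, hbd, hbc⟩ := m.exists_mem_span_degree_le_coeff_eq ha (m.degree a)
  have hbc' : b.coeff (m.degree a) = m.leadingCoeff a := by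
    rwa [leadingTerm, coeff_monomial, if_pos rfl] at hbc
  have hdeg : m.degree b = m.degree a := by
    refine m.toSyn.injective (le_antisymm hbd (m.le_degree (mem_support_iff.mpr ?_)))
    rwa [hbc', leadingCoeff_ne_zero_iff]
  refine ⟨b, hb, ?_⟩
  rw [leadingTerm, leadingTerm, leadingCoeff, hdeg, hbc']

noncomputable def leadingTermHom [NoZeroDivisors R] : MvPolynomial σ R →* MvPolynomial σ R where
  toFun := m.leadingTerm
  map_one' := by simpa using m.leadingTerm_C (1 : R)
  map_mul' := m.leadingTerm_mul

@[simp]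
theorem coe_leadingTermHom [NoZeroDivisors R] : ⇑(m.leadingTermHom (R := R)) = m.leadingTerm :=
  rfl

theorem adjoin_leadingTerm_eq_span [NoZeroDivisors R] (F : Set (MvPolynomial σ R)) :
    Subalgebra.toSubmodule (Algebra.adjoin R (m.leadingTerm '' F)) =
      span R (m.leadingTerm '' Submonoid.closure F) := by
  rw [Algebra.adjoin_eq_span, ← coe_leadingTermHom, ← MonoidHom.map_mclosure]
  rfl

theorem adjoin_eq_of_adjoin_leadingTerm_eq [NoZeroDivisors R]
    {A : Subalgebra R (MvPolynomial σ R)} {F : Set (MvPolynomial σ R)} (hFA : F ⊆ A)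
    (hF : Algebra.adjoin R (m.leadingTerm '' A) = Algebra.adjoin R (m.leadingTerm '' F)) :
    Algebra.adjoin R F = A := by
  have hBA : (Algebra.adjoin R F).toSubring.toAddSubgroup ≤ A.toSubring.toAddSubgroup :=
    Algebra.adjoin_le hFA
  refine le_antisymm (Algebra.adjoin_le hFA) (m.le_of_forall_exists_leadingTerm_eq hBA ?_)
  intro a ha
  have hlt : m.leadingTerm a ∈ span R (m.leadingTerm '' Submonoid.closure F) := by
    rw [← adjoin_leadingTerm_eq_span, ← hF]
    exact Algebra.subset_adjoin ⟨a, ha, rfl⟩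
  obtain ⟨b, hb, hba⟩ := m.exists_mem_span_leadingTerm_eq hlt
  rw [← Algebra.adjoin_eq_span] at hb
  exact ⟨b, hb, hba⟩

end MonomialOrder

namespace TermOrder

variable (ord : TermOrder n)

theorem zero_le (a : Fin n →₀ ℕ) : ord.lo.le 0 a := by
  obtain ⟨μ, -, hμ⟩ := ord.wf.has_min Set.univ ⟨0, trivial⟩
  have hμ_le (a) : ord.lo.le μ a := (@not_lt _ ord.lo _ _).mp (hμ a trivial)
  -- The least exponent `μ` satisfies `μ + μ ≤ 0 + μ = μ`, so `μ = 0`.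
  have hμμ : μ + μ = μ :=
    ord.lo.le_antisymm _ _ (by simpa using ord.add_le_add μ 0 μ (hμ_le 0)) (hμ_le _)
  rw [← add_eq_left.mp hμμ]
  exact hμ_le a

noncomputable def toMonomialOrder : MonomialOrder (Fin n) where
  syn := Fin n →₀ ℕ
  linearOrderSyn := ord.lo
  isOrderedAddMonoid_syn := @IsOrderedAddMonoid.mk _ _ ord.lo.toPreorder
    (fun a b h c => ord.add_le_add a b c h)
    (fun a b h c => by simpa only [add_comm c] using ord.add_le_add a b c h)
  toSyn := AddEquiv.refl _
  toSyn_monotone a b hab := by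
    obtain ⟨c, rfl⟩ := le_iff_exists_add.mp hab
    simpa [add_comm a] using ord.add_le_add 0 c a (ord.zero_le c)
  wellFoundedLT_syn := ⟨ord.wf⟩

theorem lp_eq_degree (p : MvPolynomial (Fin n) R) : ord.lp p = ord.toMonomialOrder.degree p := by
  rw [MonomialOrder.degree_eq_unbotD_withBotDegree, MonomialOrder.withBotDegree]
  -- `Fin n →₀ ℕ` carries its own (pointwise) order; the instances must come from `ord.lo`.
  change _ = ((@Finset.max _ ord.lo
    (@Finset.image _ _ (fun a b => ord.lo.toDecidableEq a b) id p.support)).map id).unbotD 0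
  rw [@Finset.image_id _ _ (fun a b => ord.lo.toDecidableEq a b), WithBot.map_id, id]
  rfl

theorem ltm_eq_leadingTerm :
    (ord.ltm : MvPolynomial (Fin n) R → _) = ord.toMonomialOrder.leadingTerm := by
  funext p
  simp only [ltm, lc, MonomialOrder.leadingTerm, MonomialOrder.leadingCoeff, lp_eq_degree]

end TermOrder

theorem sagbi_basis_generates_general {n : ℕ} {R : Type*} [CommRing R] [IsDomain R]
    (ord : TermOrder n)
    (A : Subalgebra R (MvPolynomial (Fin n) R)) (F : Set (MvPolynomial (Fin n) R))
    (hFA : F ⊆ (A : Set (MvPolynomial (Fin n) R))) (hF : IsSAGBI ord A F) :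
    Algebra.adjoin R F = A := by
  rw [IsSAGBI, ord.ltm_eq_leadingTerm] at hF
  exact ord.toMonomialOrder.adjoin_eq_of_adjoin_leadingTerm_eq hFA hF

/-- If `F ⊆ A` is a SAGBI basis for `A`, then `F` generates `A`
as an `R`-subalgebra, i.e. `A = R[F]`. -/
theorem sagbi_basis_generates {n : ℕ} {R : Type*} [CommRing R] [IsDomain R]
    [IsNoetherianRing R] (ord : TermOrder n)
    (A : Subalgebra R (MvPolynomial (Fin n) R)) (F : Set (MvPolynomial (Fin n) R))
    (hFA : F ⊆ (A : Set (MvPolynomial (Fin n) R))) (hF : IsSAGBI ord A F) :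
    Algebra.adjoin R F = A :=
  sagbi_basis_generates_general ord A F hFA hF
end

section
/- Let π : 𝓡 → 𝓢 be a surjective homomorphism of commutative rings, let s_1,…,s_M ∈ 𝓢, and choose preimages s̄_1,…,s̄_M ∈ 𝓡 with π(s̄_i) = s_i. Suppose P_1,…,P_L ∈ 𝓡^M with P_j = (p_{j,1},…,p_{j,M}) are such that P_1,…,P_K generate the 𝓡-module Syz(s̄_1,…,s̄_M) = {(r_1,…,r_M) ∈ 𝓡^M : Σ r_i s̄_i = 0}, and the elements Σ_{i=1}^M p_{K+1,i}·s̄_i, …, Σ_{i=1}^M p_{L,i}·s̄_i generate the ideal ker(π) ∩ ⟨s̄_1,…,s̄_M⟩ of 𝓡. Then the 𝓢-module Syz(s_1,…,s_M) = {(t_1,…,t_M) ∈ 𝓢^M : Σ t_i s_i = 0} is generated by π⃗(P_1),…,π⃗(P_L), where π⃗ : 𝓡^M → 𝓢^M applies π coordinatewise. -/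
/-- Auxiliary: coordinatewise image under `π` of a member of a span lies in the
span of the coordinatewise images of the generators. -/
lemma pi_map_span {𝓡 𝓢 : Type*} [CommRing 𝓡] [CommRing 𝓢]
    (π : 𝓡 →+* 𝓢) {M : ℕ} {ι : Type*} (P : ι → Fin M → 𝓡) (r : Fin M → 𝓡)
    (hr : r ∈ Submodule.span 𝓡 (Set.range P)) :
    (fun i => π (r i)) ∈ Submodule.span 𝓢 (Set.range fun j => fun i => π (P j i)) := by
  induction hr using Submodule.span_induction with
  | mem x hx =>
      obtain ⟨j, rfl⟩ := hx
      exact Submodule.subset_span ⟨j, rfl⟩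
  | zero =>
      have : (fun i => π ((0 : Fin M → 𝓡) i)) = (0 : Fin M → 𝓢) := by
        funext i; simp
      rw [this]; exact Submodule.zero_mem _
  | add x y _ _ hx hy =>
      have : (fun i => π ((x + y) i)) = (fun i => π (x i)) + (fun i => π (y i)) := by
        funext i; simp [map_add]
      rw [this]; exact Submodule.add_mem _ hx hy
  | smul a x _ hx =>
      have : (fun i => π ((a • x) i)) = π a • fun i => π (x i) := by
        funext i; simp [map_mul, smul_eq_mul]
      rw [this]; exact Submodule.smul_mem _ _ hx

/-- lifting syzygies along a surjective ring homomorphism.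
`π : 𝓡 → 𝓢` is surjective, `s̄ᵢ` are preimages of `sᵢ`; the vectors
`Pa₁,…,Pa_K` generate `Syz(s̄₁,…,s̄_M)` and the elements `∑ᵢ Pb_{j,i}·s̄ᵢ`
generate the ideal `ker π ⊓ ⟨s̄₁,…,s̄_M⟩`.  Then `Syz(s₁,…,s_M)` is generated
as an `𝓢`-module by the coordinatewise images of the `Pa_j` and `Pb_j`. -/
theorem syzygy_generators_of_surjective {𝓡 𝓢 : Type*} [CommRing 𝓡] [CommRing 𝓢]
    (π : 𝓡 →+* 𝓢) (hsurj : Function.Surjective π) {M K L : ℕ}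
    (s : Fin M → 𝓢) (sbar : Fin M → 𝓡) (hpre : ∀ i, π (sbar i) = s i)
    (Pa : Fin K → Fin M → 𝓡) (Pb : Fin L → Fin M → 𝓡)
    (hPa : ∀ r : Fin M → 𝓡, (∑ i, r i * sbar i = 0) ↔
      r ∈ Submodule.span 𝓡 (Set.range Pa))
    (hPb : Ideal.span (Set.range fun j => ∑ i, Pb j i * sbar i) =
      RingHom.ker π ⊓ Ideal.span (Set.range sbar)) :
    ∀ t : Fin M → 𝓢, (∑ i, t i * s i = 0) ↔
      t ∈ Submodule.span 𝓢 ((Set.range fun j => fun i => π (Pa j i)) ∪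
        (Set.range fun j => fun i => π (Pb j i))) := by
  intro t
  -- the syzygy submodule of `s`
  let σ : (Fin M → 𝓢) →ₗ[𝓢] 𝓢 :=
    { toFun := fun u => ∑ i, u i * s i
      map_add' := by intro u v; simp [add_mul, Finset.sum_add_distrib]
      map_smul' := by intro a u; simp [smul_eq_mul, mul_assoc, Finset.mul_sum] }
  constructor
  · intro ht
    -- lift t coordinatewise
    choose r hr using fun i => hsurj (t i)
    have hker : (∑ i, r i * sbar i) ∈ RingHom.ker π := by
      simp only [RingHom.mem_ker, map_sum, map_mul, hr, hpre]
      exact ht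
    have hspan : (∑ i, r i * sbar i) ∈ Ideal.span (Set.range sbar) := by
      exact Ideal.sum_mem _ fun i _ =>
        Ideal.mul_mem_left _ _ (Ideal.subset_span ⟨i, rfl⟩)
    have hmem : (∑ i, r i * sbar i) ∈
        Ideal.span (Set.range fun j => ∑ i, Pb j i * sbar i) := by
      rw [hPb]; exact ⟨hker, hspan⟩
    rw [Ideal.span, Submodule.mem_span_range_iff_exists_fun] at hmem
    obtain ⟨c, hc⟩ := hmem
    -- corrected lift is a syzygy of sbar
    set r' : Fin M → 𝓡 := r - ∑ j, c j • Pb j with hr'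
    have hsyz : ∑ i, r' i * sbar i = 0 := by
      have : ∑ i, r' i * sbar i
          = (∑ i, r i * sbar i) - ∑ j, c j * ∑ i, Pb j i * sbar i := by
        simp only [hr', Pi.sub_apply, Finset.sum_apply, Pi.smul_apply, smul_eq_mul,
          sub_mul, Finset.sum_sub_distrib, Finset.sum_mul, Finset.mul_sum]
        rw [Finset.sum_comm]
        simp [mul_assoc]
      rw [this]
      simp only [smul_eq_mul] at hc
      rw [hc, sub_self]
    have h1 : (fun i => π (r' i)) ∈
        Submodule.span 𝓢 (Set.range fun j => fun i => π (Pa j i)) :=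
      pi_map_span π Pa r' ((hPa r').mp hsyz)
    have h2 : (fun i => π ((∑ j, c j • Pb j) i)) ∈
        Submodule.span 𝓢 (Set.range fun j => fun i => π (Pb j i)) :=
      pi_map_span π Pb _ (Submodule.sum_mem _ fun j _ =>
        Submodule.smul_mem _ _ (Submodule.subset_span ⟨j, rfl⟩))
    have ht' : t = (fun i => π (r' i)) + fun i => π ((∑ j, c j • Pb j) i) := by
      funext i
      simp [hr', hr i, Pi.sub_apply, map_sub]
    rw [ht', Submodule.span_union]
    exact Submodule.add_mem _ (Submodule.mem_sup_left h1) (Submodule.mem_sup_right h2)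
  · intro ht
    have hle : Submodule.span 𝓢 ((Set.range fun j => fun i => π (Pa j i)) ∪
        (Set.range fun j => fun i => π (Pb j i))) ≤ LinearMap.ker σ := by
      rw [Submodule.span_le]
      rintro x (⟨j, rfl⟩ | ⟨j, rfl⟩) <;> simp only [SetLike.mem_coe, LinearMap.mem_ker]
      · show ∑ i, π (Pa j i) * s i = 0
        have : ∑ i, Pa j i * sbar i = 0 :=
          (hPa (Pa j)).mpr (Submodule.subset_span ⟨j, rfl⟩)
        calc ∑ i, π (Pa j i) * s i = π (∑ i, Pa j i * sbar i) := by
              simp [map_sum, map_mul, hpre]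
          _ = 0 := by rw [this, map_zero]
      · show ∑ i, π (Pb j i) * s i = 0
        have : (∑ i, Pb j i * sbar i) ∈ RingHom.ker π := by
          have : (∑ i, Pb j i * sbar i) ∈
              Ideal.span (Set.range fun j => ∑ i, Pb j i * sbar i) :=
            Ideal.subset_span ⟨j, rfl⟩
          rw [hPb] at this
          exact this.1
        rw [RingHom.mem_ker] at this
        calc ∑ i, π (Pb j i) * s i = π (∑ i, Pb j i * sbar i) := by
              simp [map_sum, map_mul, hpre]
          _ = 0 := this
    exact hle ht
end
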